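/- arXiv:1502.04200 — 2 statements merged into one kernel-verified Lean document; each statement's English description precedes it below -/
import Mathlib

section
/- Let H = ⊕_{i=0}^{N} H^i be a finite-dimensional connected graded ℚ-algebra satisfying Poincaré duality of formal dimension N (dim H^N = 1 and the pairing H^p × H^{N-p} → H^N is nondegenerate), equipped with a second grading H = ⊕_{p=0}^{e} H_p compatible with multiplication (H_p · H_q ⊆ H_{p+q}), with H_0 = ℚ·1 and H^N ⊆ H_e. Then for every 0 ≤ p ≤ e with H_p ≠ 0, and every nonzero x ∈ H_p, there exists y ∈ H_{e-p} with x·y ≠ 0. -/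
section Aux

variable {R M : Type*} [CommRing R] [AddCommGroup M] [Module R M]

/-- Projection onto the `n`-th piece of an internal direct sum decomposition. -/
noncomputable def gradedProj (A : ℕ → Submodule R M) (h : DirectSum.IsInternal A) (n : ℕ) :
    M →ₗ[R] M :=
  (A n).subtype ∘ₗ (DirectSum.component R ℕ (fun i => A i) n) ∘ₗ
    (LinearEquiv.ofBijective (DirectSum.coeLinearMap A) h).symm.toLinearMap

lemma gradedProj_mem (A : ℕ → Submodule R M) (h : DirectSum.IsInternal A) (n : ℕ) (v : M) :
    gradedProj A h n v ∈ A n :=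
  ((LinearEquiv.ofBijective (DirectSum.coeLinearMap A) h).symm v n).2

lemma gradedProj_of_mem (A : ℕ → Submodule R M) (h : DirectSum.IsInternal A) {n : ℕ} {v : M}
    (hv : v ∈ A n) : gradedProj A h n v = v := by
  simp only [gradedProj, LinearMap.comp_apply, LinearEquiv.coe_coe]
  rw [← DirectSum.apply_eq_component, h.ofBijective_coeLinearMap_of_mem hv]
  rfl

lemma gradedProj_of_mem_ne (A : ℕ → Submodule R M) (h : DirectSum.IsInternal A) {m n : ℕ}
    {v : M} (hv : v ∈ A m) (hmn : m ≠ n) : gradedProj A h n v = 0 := by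
  simp only [gradedProj, LinearMap.comp_apply, LinearEquiv.coe_coe]
  rw [← DirectSum.apply_eq_component, h.ofBijective_coeLinearMap_of_mem_ne hmn hv]
  rfl

end Aux

/-- Let `H = ⊕_{i=0}^{N} H^i` be a finite-dimensional connected
graded ℚ-algebra satisfying Poincaré duality of formal dimension `N`
(`dim H^N = 1` and the pairing `H^p × H^{N-p} → H^N` is nondegenerate),
equipped with a second (word-length) grading `H = ⊕_{p=0}^{e} H_p` compatible
with multiplication, with `H_0 = ℚ·1` and `H^N ⊆ H_e`.  Then for every
`0 ≤ p ≤ e` and every nonzero `x ∈ H_p`, there exists `y ∈ H_{e-p}` with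
`x·y ≠ 0`. -/
theorem bigraded_poincare_duality_pairing
    {H : Type*} [CommRing H] [Algebra ℚ H] [FiniteDimensional ℚ H]
    (N e : ℕ)
    -- cohomological grading
    (𝒜 : ℕ → Submodule ℚ H) (hAint : DirectSum.IsInternal 𝒜)
    (hA0 : 𝒜 0 = Submodule.span ℚ {1})  -- connected
    (hAmul : ∀ i j : ℕ, ∀ x ∈ 𝒜 i, ∀ y ∈ 𝒜 j, x * y ∈ 𝒜 (i + j))
    (hAbd : ∀ i : ℕ, N < i → 𝒜 i = ⊥)
    (hdimN : Module.finrank ℚ (𝒜 N) = 1)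
    -- Poincaré duality: the pairing H^p × H^{N-p} → H^N is nondegenerate
    (hPD : ∀ p ≤ N, ∀ x ∈ 𝒜 p, x ≠ 0 → ∃ y ∈ 𝒜 (N - p), x * y ≠ 0)
    -- the second grading, compatible with multiplication
    (ℋ : ℕ → Submodule ℚ H) (hHint : DirectSum.IsInternal ℋ)
    (hHmul : ∀ p q : ℕ, ∀ x ∈ ℋ p, ∀ y ∈ ℋ q, x * y ∈ ℋ (p + q))
    (hH0 : ℋ 0 = Submodule.span ℚ {1})
    (hHbd : ∀ p : ℕ, e < p → ℋ p = ⊥)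
    (hHtop : 𝒜 N ≤ ℋ e)
    -- compatibility: each H_p is spanned by its bihomogeneous pieces
    (hcompat : ∀ p : ℕ, ℋ p = ⨆ i : ℕ, 𝒜 i ⊓ ℋ p) :
    ∀ p ≤ e, ∀ x ∈ ℋ p, x ≠ 0 → ∃ y ∈ ℋ (e - p), x * y ≠ 0 := by
  classical
  set πA := gradedProj 𝒜 hAint with hπA
  set πH := gradedProj ℋ hHint with hπH
  -- every element has a finite ℋ-homogeneous decomposition
  have hHdec : ∀ v : H, ∃ g : ℕ →₀ H, (∀ q, g q ∈ ℋ q) ∧ (g.sum fun _ w => w) = v := by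
    intro v
    have hv : v ∈ ⨆ q, ℋ q := by
      rw [hHint.submodule_iSup_eq_top]; trivial
    exact (Submodule.mem_iSup_iff_exists_finsupp ℋ v).mp hv
  -- the projection `πA a` preserves each `ℋ p`
  have hπA_pres : ∀ a p : ℕ, ∀ w ∈ ℋ p, πA a w ∈ ℋ p := by
    intro a p w hw
    rw [hcompat p, Submodule.mem_iSup_iff_exists_finsupp] at hw
    obtain ⟨u, hu, hsum⟩ := hw
    rw [← hsum, Finsupp.sum, map_sum]
    refine Submodule.sum_mem _ fun i _ => ?_
    rcases eq_or_ne i a with rfl | hia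
    · rw [gradedProj_of_mem 𝒜 hAint ((hu i).1)]
      exact (hu i).2
    · rw [gradedProj_of_mem_ne 𝒜 hAint ((hu i).1) hia]
      exact Submodule.zero_mem _
  -- key bihomogeneity lemma: `πH q` preserves each `𝒜 a`
  have hkey : ∀ a q : ℕ, ∀ v ∈ 𝒜 a, πH q v ∈ 𝒜 a := by
    intro a q v hv
    obtain ⟨g, hg, hgsum⟩ := hHdec v
    have hv' : v = ∑ r ∈ g.support, πA a (g r) := by
      conv_lhs => rw [← gradedProj_of_mem 𝒜 hAint hv, ← hgsum]
      rw [Finsupp.sum, map_sum]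
    rw [hv', map_sum]
    refine Submodule.sum_mem _ fun r _ => ?_
    have h1 : πA a (g r) ∈ 𝒜 a := gradedProj_mem _ _ _ _
    have h2 : πA a (g r) ∈ ℋ r := hπA_pres a r _ (hg r)
    rcases eq_or_ne r q with rfl | hrq
    · rw [gradedProj_of_mem ℋ hHint h2]; exact h1
    · rw [gradedProj_of_mem_ne ℋ hHint h2 hrq]
      exact Submodule.zero_mem _
  intro p hpe x hx hx0
  -- decompose x into bihomogeneous pieces
  rw [hcompat p, Submodule.mem_iSup_iff_exists_finsupp] at hx
  obtain ⟨f, hf, hfsum⟩ := hx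
  -- pick a nonzero component
  have hexi : ∃ i, f i ≠ 0 := by
    by_contra hall
    push_neg at hall
    apply hx0
    rw [← hfsum, Finsupp.sum]
    exact Finset.sum_eq_zero fun i _ => hall i
  obtain ⟨i, hfi⟩ := hexi
  have hxiA : f i ∈ 𝒜 i := (hf i).1
  have hxiH : f i ∈ ℋ p := (hf i).2
  have hiN : i ≤ N := by
    by_contra hiN
    push_neg at hiN
    apply hfi
    have := hAbd i hiN
    rw [this] at hxiA
    simpa using hxiA
  -- Poincaré duality partner of the component
  obtain ⟨y', hy'A, hxy'⟩ := hPD i hiN (f i) hxiA hfi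
  refine ⟨πH (e - p) y', gradedProj_mem _ _ _ _, ?_⟩
  set y := πH (e - p) y' with hy
  have hyA : y ∈ 𝒜 (N - i) := hkey _ _ _ hy'A
  -- f i * y' lies in 𝒜 N ⊆ ℋ e
  have hmulN : f i * y' ∈ 𝒜 N := by
    have := hAmul i (N - i) _ hxiA _ hy'A
    rwa [Nat.add_sub_cancel' hiN] at this
  have hmulE : f i * y' ∈ ℋ e := hHtop hmulN
  -- compute: πH e (f i * y') = f i * y
  have hstep : f i * y = f i * y' := by
    obtain ⟨g, hg, hgsum⟩ := hHdec y'
    have hterm : ∀ q : ℕ, πH e (f i * g q) = f i * πH (e - p) (g q) := by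
      intro q
      have hgq : f i * g q ∈ ℋ (p + q) := hHmul p q _ hxiH _ (hg q)
      rcases eq_or_ne q (e - p) with rfl | hq
      · rw [gradedProj_of_mem ℋ hHint (hg (e - p)),
          gradedProj_of_mem ℋ hHint (by rwa [Nat.add_sub_cancel' hpe] at hgq)]
      · have hpq : p + q ≠ e := by
          intro hcon
          exact hq (by omega)
        rw [gradedProj_of_mem_ne ℋ hHint hgq hpq,
          gradedProj_of_mem_ne ℋ hHint (hg q) (Ne.symm (by omega) : q ≠ e - p)]
        ring
    have h1 : f i * y' = ∑ q ∈ g.support, f i * g q := by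
      rw [← hgsum, Finsupp.sum, Finset.mul_sum]
    calc f i * y = f i * πH (e - p) (∑ q ∈ g.support, g q) := by
            rw [hy]
            congr 1
            rw [← hgsum]; rfl
      _ = ∑ q ∈ g.support, f i * πH (e - p) (g q) := by
            rw [map_sum, Finset.mul_sum]
      _ = ∑ q ∈ g.support, πH e (f i * g q) := by
            exact Finset.sum_congr rfl fun q _ => (hterm q).symm
      _ = πH e (f i * y') := by rw [h1, map_sum]
      _ = f i * y' := gradedProj_of_mem ℋ hHint hmulE
  have hxiy : f i * y ≠ 0 := by rw [hstep]; exact hxy'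
  -- finally, project x * y onto 𝒜-degree N to see it is nonzero
  intro hcon
  apply hxiy
  have hxy : x * y = ∑ j ∈ f.support, f j * y := by
    rw [← hfsum, Finsupp.sum, Finset.sum_mul]
  have hproj : πA (i + (N - i)) (x * y) = f i * y := by
    rw [hxy, map_sum]
    have hmemfi : i ∈ f.support := Finsupp.mem_support_iff.mpr hfi
    rw [Finset.sum_eq_single_of_mem i hmemfi]
    · exact gradedProj_of_mem 𝒜 hAint (hAmul i (N - i) _ hxiA _ hyA)
    · intro j _ hji
      exact gradedProj_of_mem_ne 𝒜 hAint (hAmul j (N - i) _ ((hf j).1) _ hyA)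
        (by omega)
  rw [hcon] at hproj
  rw [← hproj, map_zero]
end

section
/- With H as a bigraded Poincaré duality algebra of formal dimension N, second grading 0,...,e, H^N ⊆ H_e, and H_p ≠ 0 for all 0 ≤ p ≤ e: setting n_p = min{ i : H^i_p ≠ 0 } and N_p = max{ i : H^i_p ≠ 0 }, one has n_p + N_{e-p} = N for all 0 ≤ p ≤ e. -/
/-- With `H` a bigraded Poincaré duality algebra of formal
dimension `N`, second grading `0,...,e`, `H^N ⊆ H_e`, and `H_p ≠ 0` for all
`0 ≤ p ≤ e`: setting `n_p = min{ i : H^i_p ≠ 0 }` and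
`N_p = max{ i : H^i_p ≠ 0 }`, one has `n_p + N_{e-p} = N` for all `0 ≤ p ≤ e`. -/
theorem bigraded_poincare_duality_degrees
    {H : Type*} [CommRing H] [Algebra ℚ H] [FiniteDimensional ℚ H]
    (N e : ℕ)
    -- cohomological grading
    (𝒜 : ℕ → Submodule ℚ H) (hAint : DirectSum.IsInternal 𝒜)
    (hA0 : 𝒜 0 = Submodule.span ℚ {1})  -- connected
    (hAmul : ∀ i j : ℕ, ∀ x ∈ 𝒜 i, ∀ y ∈ 𝒜 j, x * y ∈ 𝒜 (i + j))
    (hAbd : ∀ i : ℕ, N < i → 𝒜 i = ⊥)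
    (hAN : 𝒜 N ≠ ⊥)
    -- the second (word-length) grading
    (ℋ : ℕ → Submodule ℚ H) (hHint : DirectSum.IsInternal ℋ)
    (hHmul : ∀ p q : ℕ, ∀ x ∈ ℋ p, ∀ y ∈ ℋ q, x * y ∈ ℋ (p + q))
    (hH0 : ℋ 0 = Submodule.span ℚ {1})
    (hHbd : ∀ p : ℕ, e < p → ℋ p = ⊥)
    (hHne : ∀ p ≤ e, ℋ p ≠ ⊥)
    (hHtop : 𝒜 N ≤ ℋ e)
    -- compatibility: each H_p is spanned by its bihomogeneous pieces
    (hcompat : ∀ p : ℕ, ℋ p = ⨆ i : ℕ, 𝒜 i ⊓ ℋ p)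
    -- bigraded Poincaré duality: nondegenerate pairing
    -- H^i_p × H^{N-i}_{e-p} → H^N_e
    (hPD : ∀ i ≤ N, ∀ p ≤ e, ∀ x ∈ 𝒜 i ⊓ ℋ p, x ≠ 0 →
      ∃ y ∈ 𝒜 (N - i) ⊓ ℋ (e - p), x * y ≠ 0) :
    ∀ p ≤ e,
      sInf {i : ℕ | 𝒜 i ⊓ ℋ p ≠ ⊥} + sSup {i : ℕ | 𝒜 i ⊓ ℋ (e - p) ≠ ⊥} = N := by
  intro p hp
  set S : ℕ → Set ℕ := fun q => {i : ℕ | 𝒜 i ⊓ ℋ q ≠ ⊥} with hS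
  have hbd : ∀ q, ∀ i ∈ S q, i ≤ N := by
    intro q i hi
    by_contra h
    push_neg at h
    exact hi (by rw [hAbd i h, bot_inf_eq])
  have hne : ∀ q ≤ e, (S q).Nonempty := by
    intro q hq
    by_contra h
    rw [Set.not_nonempty_iff_eq_empty] at h
    apply hHne q hq
    rw [hcompat q]
    apply le_bot_iff.mp
    apply iSup_le
    intro i
    have hi := Set.eq_empty_iff_forall_notMem.mp h i
    simp only [hS, Set.mem_setOf_eq, not_not] at hi
    exact hi.le
  have key : ∀ q ≤ e, ∀ i ∈ S q, (N - i) ∈ S (e - q) := by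
    intro q hq i hi
    obtain ⟨x, hx, hx0⟩ := (Submodule.ne_bot_iff _).mp hi
    obtain ⟨y, hy, hxy⟩ := hPD i (hbd q i hi) q hq x hx hx0
    have hy0 : y ≠ 0 := by rintro rfl; simp at hxy
    exact (Submodule.ne_bot_iff _).mpr ⟨y, hy, hy0⟩
  have hp' : e - p ≤ e := Nat.sub_le e p
  have hi0 : sInf (S p) ∈ S p := Nat.sInf_mem (hne p hp)
  have hj0 : sSup (S (e - p)) ∈ S (e - p) :=
    Nat.sSup_mem (hne _ hp') ⟨N, fun i hi => hbd _ i hi⟩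
  have h1 : (N - sInf (S p)) ∈ S (e - p) := key p hp _ hi0
  have h2 : (N - sSup (S (e - p))) ∈ S (e - (e - p)) := key (e - p) hp' _ hj0
  rw [Nat.sub_sub_self hp] at h2
  have hle1 : N - sInf (S p) ≤ sSup (S (e - p)) :=
    le_csSup ⟨N, fun i hi => hbd _ i hi⟩ h1
  have hle2 : sInf (S p) ≤ N - sSup (S (e - p)) := Nat.sInf_le h2
  have hiN := hbd p _ hi0
  have hjN := hbd (e - p) _ hj0
  show sInf (S p) + sSup (S (e - p)) = N
  omega
end
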